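/- arXiv:2105.03149 — 2 statements merged into one kernel-verified Lean document; each statement's English description precedes it below -/
import Mathlib

section
/- Let V be a real vector space, n a natural number with n ≥ 3, ρ ∈ V, A a linear functional on V with A(ρ) = −1, and α, β real numbers. Define Q(U) = α·U + β·A(U)·ρ, S(U,ρ) = (α − β)·A(U), r = n·α − β, and R(U,W) = ((α − β)/(1 − n))·(A(U)·W − A(W)·U). Then for all U, W ∈ V: R(U,W) − (1/(n−2))·[ A(W)·Q(U) − A(U)·Q(W) + S(W,ρ)·U − S(U,ρ)·W − (r/(n−1))·(A(W)·U − A(U)·W) ] = 0. -/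
/-!
The terms of `C(U,W)ρ` along `ρ` cancel because `A W • A U - A U • A W = 0`, so everything is a
multiple of `A W • U - A U • W`. The bracket of the Weyl tensor contributes
`(2α - β) - (nα - β)/(n - 1) = (n - 2)(α - β)/(n - 1)` times it, which after division by `n - 2`
is exactly the coefficient `(α - β)/(n - 1)` of `R(U,W)ρ`.
-/

section

variable {K V : Type*} [Field K] [AddCommGroup V] [Module K V]

theorem wedge_perfectFluidRicci (A : V → K) (ρ : V) (α β : K) (U W : V) :
    A W • (α • U + β • A U • ρ) - A U • (α • W + β • A W • ρ) = α • (A W • U - A U • W) := by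
  simp only [smul_add, smul_sub, smul_comm (A W) α, smul_comm (A U) α, smul_smul, mul_left_comm,
    mul_comm (A U) (A W)]
  abel

theorem weylBracket_perfectFluid (A : V → K) (ρ : V) (α β n : K) (hn : n - 1 ≠ 0) (U W : V) :
    A W • (α • U + β • A U • ρ) - A U • (α • W + β • A W • ρ)
        + ((α - β) * A W) • U - ((α - β) * A U) • W
        - ((n * α - β) / (n - 1)) • (A W • U - A U • W)
      = ((n - 2) * (α - β) / (n - 1)) • (A W • U - A U • W) := by
  have hcoeff : α + (α - β) - (n * α - β) / (n - 1) = (n - 2) * (α - β) / (n - 1) := by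
    field_simp
    ring
  rw [wedge_perfectFluidRicci, ← hcoeff, sub_smul, add_smul, smul_sub (α - β), smul_smul,
    smul_smul]
  abel

end

theorem stmt_4_general (V : Type*) [AddCommGroup V] [Module ℝ V]
    (n : ℕ) (hn : 3 ≤ n)
    (ρ : V) (A : V →ₗ[ℝ] ℝ) (α β : ℝ)
    (Q : V → V) (hQ : ∀ U : V, Q U = α • U + β • A U • ρ) :
    ∀ U W : V,
      ((α - β) / (1 - (n : ℝ))) • (A U • W - A W • U)
        - ((1 : ℝ) / ((n : ℝ) - 2)) •
          (A W • Q U - A U • Q W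
            + ((α - β) * A W) • U - ((α - β) * A U) • W
            - (((n : ℝ) * α - β) / ((n : ℝ) - 1)) • (A W • U - A U • W)) = 0 := by
  intro U W
  have hn3 : (3 : ℝ) ≤ n := by exact_mod_cast hn
  have hn1 : (n : ℝ) - 1 ≠ 0 := by linarith
  have hn2 : (n : ℝ) - 2 ≠ 0 := by linarith
  have hcoeff : -((α - β) / (1 - n)) - 1 / (n - 2) * ((n - 2) * (α - β) / (n - 1)) = 0 := by
    have hn1' : (1 : ℝ) - n ≠ 0 := by linarith
    field_simp
    ring
  rw [hQ, hQ, weylBracket_perfectFluid A ρ α β n hn1, smul_smul, ← neg_sub (A W • U), smul_neg,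
    ← neg_smul, ← sub_smul, hcoeff, zero_smul]

/-- Pointwise algebraic content of Theorem 2.1: with `Q U = α • U + β • A U • ρ`,
`S(U,ρ) = (α - β) A U`, `r = n α - β` and
`R(U,W) = ((α - β)/(1 - n)) • (A U • W - A W • U)`, the Weyl-type combination
`R(U,W) - (1/(n-2)) [A W • Q U - A U • Q W + S(W,ρ) • U - S(U,ρ) • W
  - (r/(n-1)) (A W • U - A U • W)]` vanishes, i.e. `C(U,W)ρ = 0`. -/
theorem stmt_4 (V : Type*) [AddCommGroup V] [Module ℝ V]
    (n : ℕ) (hn : 3 ≤ n)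
    (ρ : V) (A : V →ₗ[ℝ] ℝ) (hA : A ρ = -1) (α β : ℝ)
    (Q : V → V) (hQ : ∀ U : V, Q U = α • U + β • A U • ρ) :
    ∀ U W : V,
      ((α - β) / (1 - (n : ℝ))) • (A U • W - A W • U)
        - ((1 : ℝ) / ((n : ℝ) - 2)) •
          (A W • Q U - A U • Q W
            + ((α - β) * A W) • U - ((α - β) * A U) • W
            - (((n : ℝ) * α - β) / ((n : ℝ) - 1)) • (A W • U - A U • W)) = 0 :=
  stmt_4_general V n hn ρ A α β Q hQ
end

section
/- Let V be a real vector space, g a symmetric bilinear form on V, ρ ∈ V with g(ρ,ρ) = −1, A the linear functional A(X) = g(X,ρ), P a symmetric bilinear form on V, and c a nonzero real number. Suppose (i) P(W,ρ) = −A(W)·P(ρ,ρ) for all W ∈ V, and (ii) for all U, X, Y ∈ V: P(c·(g(U,X)·ρ − A(X)·U), Y) + P(X, c·(g(U,Y)·ρ − A(Y)·U)) = 0. Then P(X,U) = −P(ρ,ρ)·g(X,U) for all X, U ∈ V; in particular P is a constant multiple of g. -/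
/-!
Substituting `Y = ρ` in the invariance identity and using `P(W, ρ) = -A(W) P(ρ, ρ)` together
with `A(ρ) = -1`, the two terms proportional to `A(X) A(U) P(ρ, ρ)` cancel, leaving
`c (P(X, U) + P(ρ, ρ) g(U, X)) = 0`.
-/

namespace LinearMap.BilinForm

variable {R V : Type*} [CommRing R] [AddCommGroup V] [Module R V]

theorem apply_sub_smul_right_add_apply_sub_smul_right (g P : LinearMap.BilinForm R V) {ρ : V}
    (hρ : g ρ ρ = -1) (hPρ : ∀ W, P W ρ = -(g W ρ * P ρ ρ)) (U X : V) :
    P (g U X • ρ - g X ρ • U) ρ + P X (g U ρ • ρ - g ρ ρ • U) = P X U + P ρ ρ * g U X := by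
  simp only [map_sub, map_smul, LinearMap.sub_apply, LinearMap.smul_apply, smul_eq_mul]
  rw [hPρ U, hPρ X, hρ]
  ring

theorem eq_neg_mul_of_smul_sub_smul_skew [NoZeroDivisors R] (g P : LinearMap.BilinForm R V)
    {ρ : V} (hρ : g ρ ρ = -1) (hPρ : ∀ W, P W ρ = -(g W ρ * P ρ ρ)) {c : R} (hc : c ≠ 0)
    (hskew : ∀ U X Y : V,
      P (c • (g U X • ρ - g X ρ • U)) Y + P X (c • (g U Y • ρ - g Y ρ • U)) = 0)
    (X U : V) : P X U = -(P ρ ρ * g U X) := by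
  have h : c * (P X U + P ρ ρ * g U X) = 0 := by
    rw [← apply_sub_smul_right_add_apply_sub_smul_right g P hρ hPρ, ← hskew U X ρ]
    simp only [map_smul, LinearMap.smul_apply, smul_eq_mul, mul_add]
  exact eq_neg_of_add_eq_zero_left ((mul_eq_zero.mp h).resolve_left hc)

end LinearMap.BilinForm

theorem stmt_6_general (V : Type*) [AddCommGroup V] [Module ℝ V]
    (g : LinearMap.BilinForm ℝ V) (hgsym : ∀ X Y : V, g X Y = g Y X)
    (ρ : V) (hρ : g ρ ρ = -1)
    (A : V → ℝ) (hA : ∀ X : V, A X = g X ρ)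
    (P : LinearMap.BilinForm ℝ V)
    (c : ℝ) (hc : c ≠ 0)
    (h1 : ∀ W : V, P W ρ = -(A W * P ρ ρ))
    (h2 : ∀ U X Y : V,
      P (c • (g U X • ρ - A X • U)) Y + P X (c • (g U Y • ρ - A Y • U)) = 0) :
    ∀ X U : V, P X U = -(P ρ ρ * g X U) := by
  obtain rfl : A = fun X => g X ρ := funext hA
  intro X U
  rw [hgsym X U]
  exact LinearMap.BilinForm.eq_neg_mul_of_smul_sub_smul_skew g P hρ h1 hc h2 X U

/-- Second algebraic step of Theorem 3.1: if `P(W,ρ) = -A W * P(ρ,ρ)` and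
`P(R(U,ρ)X, Y) + P(X, R(U,ρ)Y) = 0` with `R(U,ρ)X = c (g(U,X) ρ - A X U)`, `c ≠ 0`,
then `P(X,U) = -P(ρ,ρ) g(X,U)`, so `P` is a constant multiple of `g`. -/
theorem stmt_6 (V : Type*) [AddCommGroup V] [Module ℝ V]
    (g : LinearMap.BilinForm ℝ V) (hgsym : ∀ X Y : V, g X Y = g Y X)
    (ρ : V) (hρ : g ρ ρ = -1)
    (A : V → ℝ) (hA : ∀ X : V, A X = g X ρ)
    (P : LinearMap.BilinForm ℝ V) (hPsym : ∀ X Y : V, P X Y = P Y X)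
    (c : ℝ) (hc : c ≠ 0)
    (h1 : ∀ W : V, P W ρ = -(A W * P ρ ρ))
    (h2 : ∀ U X Y : V,
      P (c • (g U X • ρ - A X • U)) Y + P X (c • (g U Y • ρ - A Y • U)) = 0) :
    ∀ X U : V, P X U = -(P ρ ρ * g X U) :=
  stmt_6_general V g hgsym ρ hρ A hA P c hc h1 h2
end
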